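/- Let d ≥ 3 and let x₁,…,x₈ ∈ ℝ^d be the special point set. Let γ be the swish activation function γ(t) = t/(1 + e^{−t}), and define the 8×8 matrix H by H_{ij} = ∫_{S^{d−1}} γ(xᵢᵀw) γ(wᵀxⱼ) dσ(w). Then Hv = 0 for the nonzero vector v = (1,−1,−1,−1,1,1,1,−1); in particular H is singular. -/

import Mathlib

open MeasureTheory Matrix
open scoped InnerProductSpace Matrix.Norms.L2Operator

/-- The uniform probability measure on the unit sphere `S^{d-1} ⊆ ℝ^d`,
viewed as a measure on the ambient Euclidean space. -/
noncomputable def sphereUniform (d : ℕ) : Measure (EuclideanSpace ℝ (Fin d)) :=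
  (((volume : Measure (EuclideanSpace ℝ (Fin d))).toSphere Set.univ)⁻¹ •
    (volume : Measure (EuclideanSpace ℝ (Fin d))).toSphere).map Subtype.val

/-- Sign pattern of the special eight-point set. -/
noncomputable def sgn : Fin 8 → Fin 3 → ℝ :=
  ![![1,1,1], ![-1,1,1], ![1,-1,1], ![1,1,-1], ![-1,-1,1], ![-1,1,-1], ![1,-1,-1], ![-1,-1,-1]]

/-- The special point set `x₁, …, x₈ ∈ ℝ^d`: the first three coordinates are `±1/√3`
with the sign pattern `sgn`, and all remaining coordinates vanish. -/
noncomputable def pts (d : ℕ) (i : Fin 8) : Fin d → ℝ :=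
  fun j => if h : (j : ℕ) < 3 then (1 / Real.sqrt 3) * sgn i ⟨j, h⟩ else 0

/-- The special point set, viewed in Euclidean space. -/
noncomputable def ptsE (d : ℕ) (i : Fin 8) : EuclideanSpace ℝ (Fin d) :=
  (WithLp.equiv 2 (Fin d → ℝ)).symm (pts d i)

/-- Smallest eigenvalue of a real symmetric matrix, via the Rayleigh quotient. -/
noncomputable def lamMin {n : ℕ} (A : Matrix (Fin n) (Fin n) ℝ) : ℝ :=
  sInf {r | ∃ u : Fin n → ℝ, ∑ i, u i ^ 2 = 1 ∧ r = u ⬝ᵥ A.mulVec u}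

/-- Largest eigenvalue of a real symmetric matrix, via the Rayleigh quotient. -/
noncomputable def lamMax {n : ℕ} (A : Matrix (Fin n) (Fin n) ℝ) : ℝ :=
  sSup {r | ∃ u : Fin n → ℝ, ∑ i, u i ^ 2 = 1 ∧ r = u ⬝ᵥ A.mulVec u}

/-- Euclidean norm of a vector in `ℝ^n`. -/
noncomputable def e2 {n : ℕ} (v : Fin n → ℝ) : ℝ := Real.sqrt (∑ i, v i ^ 2)

/-- The vector `v = (1,−1,−1,−1,1,1,1,−1)`. -/
noncomputable def vv : Fin 8 → ℝ := ![1, -1, -1, -1, 1, 1, 1, -1]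

/-!
The swish function satisfies `γ t - γ (-t) = t`. The eight points form four antipodal pairs
`xⱼ, x₉₋ⱼ` carrying opposite weights in `v`, so for every `w` the sum `∑ⱼ vⱼ γ ⟪w, xⱼ⟫` equals
`½ ⟪w, ∑ⱼ vⱼ xⱼ⟫ = 0`. Hence every row of `H v` is the integral of a function vanishing identically.
-/

lemma swish_sub_swish_neg (t : ℝ) :
    t / (1 + Real.exp (-t)) - -t / (1 + Real.exp (-(-t))) = t := by
  rw [neg_neg]
  have hexp : Real.exp (-t) * Real.exp t = 1 := by rw [← Real.exp_add, neg_add_cancel, Real.exp_zero]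
  field_simp
  linear_combination (-t) * hexp

lemma continuous_swish : Continuous fun t : ℝ => t / (1 + Real.exp (-t)) :=
  continuous_id.div (by fun_prop) fun t => by positivity

/-- Pairing `j` with `rev j` shows that the sum only sees the odd part of `f`, which is linear. -/
lemma sum_mul_apply_inner_eq_zero {E : Type*} [NormedAddCommGroup E] [InnerProductSpace ℝ E]
    {n : ℕ} {f : ℝ → ℝ} (hf : ∀ t, f t - f (-t) = t) {x : Fin n → E} {v : Fin n → ℝ}
    (hx : ∀ j, x (Fin.rev j) = -x j) (hv : ∀ j, v (Fin.rev j) = -v j)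
    (hsum : ∑ j, v j • x j = 0) (w : E) :
    ∑ j, v j * f ⟪w, x j⟫_ℝ = 0 := by
  have hrev : ∑ j, v j * f ⟪w, x j⟫_ℝ = -∑ j, v j * f (-⟪w, x j⟫_ℝ) := by
    rw [← Equiv.sum_comp Fin.revPerm, ← Finset.sum_neg_distrib]
    refine Finset.sum_congr rfl fun j _ => ?_
    simp only [Fin.revPerm_apply, hx, hv, inner_neg_right]
    ring
  have hlin : ∑ j, v j * (f ⟪w, x j⟫_ℝ - f (-⟪w, x j⟫_ℝ)) = 0 := by
    simp only [hf, ← inner_smul_right, ← inner_sum, hsum, inner_zero_right]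
  simp only [mul_sub, Finset.sum_sub_distrib] at hlin
  linarith

lemma ptsE_rev (d : ℕ) (j : Fin 8) : ptsE d (Fin.rev j) = -ptsE d j := by
  ext k
  simp only [ptsE, pts, WithLp.equiv_symm_apply, PiLp.neg_apply]
  split_ifs with hk
  · generalize (⟨k, hk⟩ : Fin 3) = m
    fin_cases j <;> fin_cases m <;> simp [sgn]
  · simp

lemma vv_rev (j : Fin 8) : vv (Fin.rev j) = -vv j := by
  fin_cases j <;> simp [vv]

lemma sum_vv_smul_ptsE (d : ℕ) : ∑ j, vv j • ptsE d j = 0 := by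
  ext k
  simp only [ptsE, pts, WithLp.equiv_symm_apply, WithLp.ofLp_sum, Finset.sum_apply,
    PiLp.smul_apply, smul_eq_mul, PiLp.zero_apply]
  split_ifs with hk
  · generalize (⟨k, hk⟩ : Fin 3) = m
    fin_cases m <;> simp [Fin.sum_univ_eight, vv, sgn]
  · simp

lemma Continuous.integrable_sphereUniform {d : ℕ} {F : Type*} [NormedAddCommGroup F]
    {g : EuclideanSpace ℝ (Fin d) → F} (hg : Continuous g) : Integrable g (sphereUniform d) := by
  rw [sphereUniform,
    (MeasurableEmbedding.subtype_coe Metric.isClosed_sphere.measurableSet).integrable_map_iff]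
  have : IsFiniteMeasure (((volume : Measure (EuclideanSpace ℝ (Fin d))).toSphere Set.univ)⁻¹ •
      (volume : Measure (EuclideanSpace ℝ (Fin d))).toSphere) :=
    ⟨(ENNReal.inv_mul_le_one _).trans_lt ENNReal.one_lt_top⟩
  exact (hg.comp continuous_subtype_val).integrable_of_hasCompactSupport (.of_compactSpace _)

lemma Matrix.of_integral_mul_mulVec_eq_zero {ι α : Type*} [Fintype ι] [MeasurableSpace α]
    {μ : Measure α} {f g : ι → α → ℝ} {v : ι → ℝ}
    (hint : ∀ i j, Integrable (fun a => f i a * g j a) μ) (hv : ∀ a, ∑ j, v j * g j a = 0) :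
    (Matrix.of fun i j => ∫ a, f i a * g j a ∂μ) *ᵥ v = 0 := by
  funext i
  calc ∑ j, (∫ a, f i a * g j a ∂μ) * v j
      = ∫ a, ∑ j, f i a * g j a * v j ∂μ := by
        rw [integral_finsetSum _ fun j _ => (hint i j).mul_const _]
        simp only [integral_mul_const]
    _ = 0 := by
        simp only [mul_assoc, ← Finset.mul_sum, mul_comm (g _ _), hv, mul_zero, integral_zero]

theorem stmt_16_general (d : ℕ)
    (γ : ℝ → ℝ) (hγ : ∀ t, γ t = t / (1 + Real.exp (-t)))
    (H : Matrix (Fin 8) (Fin 8) ℝ)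
    (hH : H = Matrix.of fun i j =>
      ∫ w, γ ⟪ptsE d i, w⟫_ℝ * γ ⟪w, ptsE d j⟫_ℝ ∂(sphereUniform d)) :
    vv ≠ 0 ∧ H.mulVec vv = 0 ∧ H.det = 0 := by
  obtain rfl : γ = fun t => t / (1 + Real.exp (-t)) := funext hγ
  have hvv : vv ≠ 0 := fun h => by simpa [vv] using congrFun h 0
  have hmul : H *ᵥ vv = 0 := by
    subst hH
    refine Matrix.of_integral_mul_mulVec_eq_zero (fun i j => ?_)
      (sum_mul_apply_inner_eq_zero swish_sub_swish_neg (ptsE_rev d) vv_rev (sum_vv_smul_ptsE d))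
    exact ((continuous_swish.comp (continuous_const.inner continuous_id)).mul
      (continuous_swish.comp (continuous_id.inner continuous_const))).integrable_sphereUniform
  exact ⟨hvv, hmul, Matrix.exists_mulVec_eq_zero_iff.mp ⟨vv, hvv, hmul⟩⟩

/-- with the special point set and the swish activation
`γ(t) = t/(1 + e^{−t})`, the population matrix `H` satisfies `Hv = 0` for the
nonzero vector `v = (1,−1,−1,−1,1,1,1,−1)`; in particular `H` is singular. -/
theorem stmt_16 (d : ℕ) (hd : 3 ≤ d)
    (γ : ℝ → ℝ) (hγ : ∀ t, γ t = t / (1 + Real.exp (-t)))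
    (H : Matrix (Fin 8) (Fin 8) ℝ)
    (hH : H = Matrix.of fun i j =>
      ∫ w, γ ⟪ptsE d i, w⟫_ℝ * γ ⟪w, ptsE d j⟫_ℝ ∂(sphereUniform d)) :
    vv ≠ 0 ∧ H.mulVec vv = 0 ∧ H.det = 0 :=
  stmt_16_general d γ hγ H hH
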